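/- arXiv:1205.1930 — 4 statements merged into one kernel-verified Lean document; each statement's English description precedes it below -/
import Mathlib

section
/- Let (X, μ) be a standard non-atomic Borel probability space and let 𝓑 be a measure-dense system of Borel subsets of X. Let F₁, …, F_s ∈ 𝓑 be a partition of X into sets of positive measure and let ε > 0. Then there exist an integer p ≥ 1 and pairwise disjoint sets G₁, …, G_p ∈ 𝓑, each of positive measure and each contained in one of the sets F₁, …, F_s, such that for every measurable function T : X → ℂ with |T(x)| ≤ 1 for μ-almost every x, one has |∫_X T dμ − (1/p) Σ_{j=1}^p μ(G_j)^{-1} ∫_{G_j} T dμ| ≤ ε. -/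
/-!
Non-atomicity gives measurable subsets of any prescribed measure (pull back a half-line under a
Borel embedding into `ℝ` and use that the distribution function is continuous), and
measure-density lets us replace them by nearby members of `𝓑`. Carving each `F i` greedily into
pieces of measure `≈ q` yields `p` disjoint sets of almost equal measure which miss at most `s q`
of the space. Since `|T| ≤ 1`, the average of the normalized integrals differs from `∫ T` by at
most the uncovered measure plus `∑ j, |μ (G j) - 1/p|`, which is small once `q` is small and the
approximation error is small compared to `q`.
-/

open MeasureTheory ProbabilityTheory Set Function
open scoped symmDiff

theorem ProbabilityTheory.continuous_cdf (P : Measure ℝ) [IsProbabilityMeasure P]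
    [NullSingletonClass P] : Continuous (cdf P) := by
  refine continuous_iff_continuousAt.2 fun x => ?_
  have hmono := monotone_cdf P
  rw [hmono.continuousAt_iff_leftLim_eq_rightLim, (cdf P).rightLim_eq]
  have hjump : (cdf P).measure {x} = 0 := by rw [measure_cdf]; exact measure_singleton x
  rw [StieltjesFunction.measure_singleton, ENNReal.ofReal_eq_zero] at hjump
  exact le_antisymm (hmono.leftLim_le le_rfl) (by linarith)

theorem ProbabilityTheory.exists_cdf_eq (P : Measure ℝ) [IsProbabilityMeasure P]
    [NullSingletonClass P] {t : ℝ} (ht : t ∈ Ioo 0 1) : ∃ c, cdf P c = t :=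
  mem_range_of_exists_le_of_exists_ge (continuous_cdf P)
    (((tendsto_cdf_atBot P).eventually_lt_const ht.1).exists.imp fun _ => le_of_lt)
    (((tendsto_cdf_atTop P).eventually_const_lt ht.2).exists.imp fun _ => le_of_lt)

theorem Pairwise.disjoint_sigma {α ι : Type*} [PartialOrder α] [OrderBot α] {κ : ι → Type*}
    {F : ι → α} (hF : Pairwise (Disjoint on F)) {H : ∀ i, κ i → α}
    (hH : ∀ i, Pairwise (Disjoint on H i)) (hHF : ∀ i k, H i k ≤ F i) :
    Pairwise (Disjoint on fun x : Σ i, κ i => H x.1 x.2) := by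
  rintro ⟨i, k⟩ ⟨i', k'⟩ hne
  by_cases h : i = i'
  · subst h
    exact hH i fun hk => hne (congrArg _ hk)
  · exact (hF h).mono (hHF i k) (hHF i' k')

variable {X : Type*} [MeasurableSpace X] {μ : Measure X} {𝓑 : Set (Set X)}

theorem MeasureTheory.Measure.nullSingletonClass_map {Y : Type*} [MeasurableSpace Y]
    [MeasurableSingletonClass Y] [NullSingletonClass μ] {f : X → Y} (hf : Measurable f)
    (hinj : Injective f) : NullSingletonClass (μ.map f) :=
  ⟨fun y => by
    rw [Measure.map_apply hf (measurableSet_singleton y)]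
    exact (subsingleton_singleton.preimage hinj).measure_zero μ⟩

instance ProbabilityTheory.cond.instNullSingletonClass [NullSingletonClass μ] (s : Set X) :
    NullSingletonClass μ[|s] :=
  ⟨fun x => by simp [cond]⟩

theorem ProbabilityTheory.cond_real_apply {s : Set X} (hs : MeasurableSet s) (t : Set X) :
    μ[|s].real t = (μ.real s)⁻¹ * μ.real (s ∩ t) := by
  simp [measureReal_def, cond_apply hs, ENNReal.toReal_mul, ENNReal.toReal_inv]

theorem exists_subset_measureReal_eq [StandardBorelSpace X] [IsFiniteMeasure μ]
    [NullSingletonClass μ] {A : Set X} (hA : MeasurableSet A) {r : ℝ} (hr : r ∈ Icc 0 (μ.real A)) :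
    ∃ B ⊆ A, MeasurableSet B ∧ μ.real B = r := by
  rcases hr.1.eq_or_lt with rfl | hr0
  · exact ⟨∅, empty_subset A, .empty, measureReal_empty⟩
  rcases hr.2.eq_or_lt with rfl | hrA
  · exact ⟨A, subset_rfl, hA, rfl⟩
  have hA0 : 0 < μ.real A := hr0.trans hrA
  obtain ⟨f, hf⟩ := exists_measurableEmbedding_real X
  have := cond_isProbabilityMeasure (μ := μ) ((measureReal_ne_zero_iff).1 hA0.ne')
  have := Measure.isProbabilityMeasure_map (μ := μ[|A]) hf.measurable.aemeasurable
  have := Measure.nullSingletonClass_map (μ := μ[|A]) hf.measurable hf.injective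
  obtain ⟨c, hc⟩ := exists_cdf_eq ((μ[|A]).map f) (t := r / μ.real A)
    ⟨by positivity, (div_lt_one hA0).2 hrA⟩
  refine ⟨A ∩ f ⁻¹' Iic c, inter_subset_left, hA.inter (hf.measurable measurableSet_Iic), ?_⟩
  rw [cdf_eq_real, map_measureReal_apply hf.measurable measurableSet_Iic,
    cond_real_apply hA] at hc
  field_simp at hc
  linarith

theorem MeasureTheory.Measure.measureDense_of_measureReal_symmDiff_lt [IsFiniteMeasure μ]
    (hmeas : ∀ B ∈ 𝓑, MeasurableSet B)
    (hdense : ∀ A, MeasurableSet A → ∀ ε : ℝ, 0 < ε → ∃ B ∈ 𝓑, μ.real (A ∆ B) < ε) :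
    μ.MeasureDense 𝓑 where
  measurable := hmeas
  approx A hA _ ε hε := (hdense A hA ε hε).imp fun _ ⟨hB, hAB⟩ =>
    ⟨hB, (ENNReal.lt_ofReal_iff_toReal_lt (measure_ne_top _ _)).2 hAB⟩

theorem exists_mem_subset_abs_measureReal_sub_le [IsFiniteMeasure μ] [StandardBorelSpace X]
    [NullSingletonClass μ] (h𝓑 : μ.MeasureDense 𝓑) (hinter : ∀ B ∈ 𝓑, ∀ C ∈ 𝓑, B ∩ C ∈ 𝓑)
    {S : Set X} (hS : S ∈ 𝓑) {τ : ℝ} (hτ : τ ∈ Icc 0 (μ.real S)) {δ : ℝ} (hδ : 0 < δ) :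
    ∃ G ∈ 𝓑, G ⊆ S ∧ |μ.real G - τ| ≤ δ := by
  obtain ⟨A, hAS, hA, rfl⟩ := exists_subset_measureReal_eq (h𝓑.measurable S hS) hτ
  obtain ⟨B, hB, hAB⟩ := h𝓑.approx A hA (measure_ne_top μ A) δ hδ
  refine ⟨B ∩ S, hinter B hB S hS, inter_subset_right, ?_⟩
  have hsymm : (B ∩ S) ∆ A ⊆ A ∆ B := fun x => by
    have := @hAS x
    simp only [mem_symmDiff, mem_inter_iff]
    tauto
  calc |μ.real (B ∩ S) - μ.real A|
      ≤ μ.real ((B ∩ S) ∆ A) := abs_measureReal_sub_le_measureReal_symmDiff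
        (h𝓑.measurable _ (hinter B hB S hS)).nullMeasurableSet hA.nullMeasurableSet
    _ ≤ μ.real (A ∆ B) := measureReal_mono hsymm
    _ ≤ δ := (ENNReal.toReal_le_of_le_ofReal hδ.le hAB.le)

theorem exists_pairwise_disjoint_mem_subset_abs_measureReal_sub_le [IsFiniteMeasure μ]
    [StandardBorelSpace X] [NullSingletonClass μ] (h𝓑 : μ.MeasureDense 𝓑)
    (hcompl : ∀ B ∈ 𝓑, Bᶜ ∈ 𝓑) (hinter : ∀ B ∈ 𝓑, ∀ C ∈ 𝓑, B ∩ C ∈ 𝓑)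
    {τ δ : ℝ} (hτ : 0 ≤ τ) (hδ : 0 < δ) (k : ℕ) {S : Set X} (hS : S ∈ 𝓑)
    (hk : k * (τ + δ) ≤ μ.real S) :
    ∃ G : Fin k → Set X, Pairwise (Disjoint on G) ∧
      ∀ j, G j ∈ 𝓑 ∧ G j ⊆ S ∧ |μ.real (G j) - τ| ≤ δ := by
  induction k generalizing S with
  | zero => exact ⟨finZeroElim, fun i => i.elim0, fun i => i.elim0⟩
  | succ k ih =>
    push_cast at hk
    obtain ⟨G₀, hG₀, hG₀S, hG₀τ⟩ := exists_mem_subset_abs_measureReal_sub_le h𝓑 hinter hS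
      ⟨hτ, by nlinarith⟩ hδ
    have hrest : S \ G₀ ∈ 𝓑 := by rw [Set.sdiff_eq]; exact hinter S hS _ (hcompl G₀ hG₀)
    have hrest_measure : k * (τ + δ) ≤ μ.real (S \ G₀) := by
      rw [measureReal_sdiff hG₀S (h𝓑.measurable G₀ hG₀)]
      linarith [(abs_le.1 hG₀τ).2]
    obtain ⟨G, hG, hGmem⟩ := ih hrest hrest_measure
    have hG₀G : ∀ j, Disjoint G₀ (G j) := fun j => disjoint_sdiff_right.mono_right (hGmem j).2.1
    refine ⟨Fin.cons G₀ G, pairwise_fin_succ_iff.2 ⟨?_, ?_, ?_⟩, Fin.cases ?_ fun j => ?_⟩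
    · exact fun j => (hG₀G j).symm
    · exact hG₀G
    · exact fun i j hij => hG hij
    · exact ⟨hG₀, hG₀S, hG₀τ⟩
    · exact ⟨(hGmem j).1, (hGmem j).2.1.trans sdiff_subset, (hGmem j).2.2⟩

theorem exists_fin_refinement_abs_measureReal_sub_le [IsFiniteMeasure μ]
    [StandardBorelSpace X] [NullSingletonClass μ] (h𝓑 : μ.MeasureDense 𝓑)
    (hcompl : ∀ B ∈ 𝓑, Bᶜ ∈ 𝓑) (hinter : ∀ B ∈ 𝓑, ∀ C ∈ 𝓑, B ∩ C ∈ 𝓑)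
    {s : ℕ} {F : Fin s → Set X} (hF : ∀ i, F i ∈ 𝓑) (hFdisj : Pairwise (Disjoint on F))
    {τ δ : ℝ} (hτ : 0 ≤ τ) (hδ : 0 < δ) :
    ∃ (p : ℕ) (G : Fin p → Set X), (∀ j, G j ∈ 𝓑) ∧ Pairwise (Disjoint on G) ∧
      (∀ j, ∃ i, G j ⊆ F i) ∧ (∀ j, |μ.real (G j) - τ| ≤ δ) ∧
      p * (τ + δ) ≤ μ.real (⋃ i, F i) ∧ μ.real (⋃ i, F i) ≤ (p + s) * (τ + δ) := by
  have hq : 0 < τ + δ := by positivity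
  set a : Fin s → ℕ := fun i => ⌊μ.real (F i) / (τ + δ)⌋₊
  have ha_le : ∀ i, a i * (τ + δ) ≤ μ.real (F i) := fun i =>
    (le_div_iff₀ hq).1 (Nat.floor_le (by positivity))
  have ha_gt : ∀ i, μ.real (F i) ≤ (a i + 1) * (τ + δ) := fun i =>
    ((div_lt_iff₀ hq).1 (Nat.lt_floor_add_one _)).le
  choose H hHdisj hH using fun i =>
    exists_pairwise_disjoint_mem_subset_abs_measureReal_sub_le h𝓑 hcompl hinter hτ hδ (a i)
      (hF i) (ha_le i)
  have hunion : μ.real (⋃ i, F i) = ∑ i, μ.real (F i) :=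
    measureReal_iUnion_fintype hFdisj fun i => h𝓑.measurable _ (hF i)
  refine ⟨∑ i, a i, fun j => H (finSigmaFinEquiv.symm j).1 (finSigmaFinEquiv.symm j).2,
    fun j => (hH _ _).1, ?_, fun j => ⟨_, (hH _ _).2.1⟩, fun j => (hH _ _).2.2, ?_, ?_⟩
  · exact (hFdisj.disjoint_sigma hHdisj fun i k => (hH i k).2.1).comp_of_injective
      finSigmaFinEquiv.symm.injective
  · rw [hunion]
    push_cast
    rw [Finset.sum_mul]
    exact Finset.sum_le_sum fun i _ => ha_le i
  · rw [hunion]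
    calc ∑ i, μ.real (F i) ≤ ∑ i, (a i + 1) * (τ + δ) := Finset.sum_le_sum fun i _ => ha_gt i
      _ = _ := by rw [← Finset.sum_mul, Finset.sum_add_distrib]; simp

theorem norm_setIntegral_sub_mul_inv_mul_setIntegral_le [IsFiniteMeasure μ] {T : X → ℂ}
    (hT1 : ∀ᵐ x ∂μ, ‖T x‖ ≤ 1) (s : Set X) (w : ℝ) :
    ‖∫ x in s, T x ∂μ - w * ((μ.real s : ℂ)⁻¹ * ∫ x in s, T x ∂μ)‖ ≤ |μ.real s - w| := by
  have hI : ‖∫ x in s, T x ∂μ‖ ≤ μ.real s := by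
    simpa using norm_setIntegral_le_of_norm_le_const_ae' (C := 1) (measure_lt_top μ s)
      (hT1.mono fun x hx _ => hx)
  rcases measureReal_nonneg.eq_or_lt with hs | hs
  · rw [← hs, norm_le_zero_iff] at hI
    simp [hI]
  calc ‖∫ x in s, T x ∂μ - w * ((μ.real s : ℂ)⁻¹ * ∫ x in s, T x ∂μ)‖
      = |1 - w / μ.real s| * ‖∫ x in s, T x ∂μ‖ := by
        rw [← Real.norm_eq_abs, ← Complex.norm_real, ← norm_mul]
        congr 1
        push_cast
        ring
    _ ≤ |1 - w / μ.real s| * μ.real s := by gcongr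
    _ = |μ.real s - w| := by
        rw [← abs_of_pos hs, ← abs_mul, abs_of_pos hs]
        congr 1
        field_simp

theorem norm_integral_sub_mul_sum_inv_mul_setIntegral_le [IsFiniteMeasure μ] {ι : Type*}
    [Fintype ι] {G : ι → Set X} (hG : ∀ j, MeasurableSet (G j))
    (hdisj : Pairwise (Disjoint on G)) {T : X → ℂ} (hT : AEStronglyMeasurable T μ)
    (hT1 : ∀ᵐ x ∂μ, ‖T x‖ ≤ 1) (w : ℝ) :
    ‖∫ x, T x ∂μ - w * ∑ j, (μ.real (G j) : ℂ)⁻¹ * ∫ x in G j, T x ∂μ‖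
      ≤ μ.real (⋃ j, G j)ᶜ + ∑ j, |μ.real (G j) - w| := by
  have hint : Integrable T μ := .mono' (integrable_const 1) hT hT1
  have hsplit : ∫ x, T x ∂μ = ∫ x in (⋃ j, G j)ᶜ, T x ∂μ + ∑ j, ∫ x in G j, T x ∂μ := by
    rw [← integral_add_compl (.iUnion hG) hint, add_comm,
      integral_iUnion_fintype hG hdisj fun j => hint.integrableOn]
  have hcompl : ‖∫ x in (⋃ j, G j)ᶜ, T x ∂μ‖ ≤ μ.real (⋃ j, G j)ᶜ := by
    simpa using norm_setIntegral_le_of_norm_le_const_ae' (C := 1) (measure_lt_top μ _)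
      (hT1.mono fun x hx _ => hx)
  rw [hsplit, add_sub_assoc, Finset.mul_sum, ← Finset.sum_sub_distrib]
  grw [norm_add_le, norm_sum_le, hcompl]
  gcongr with j
  exact norm_setIntegral_sub_mul_inv_mul_setIntegral_le hT1 (G j) w

theorem one_sub_sum_add_sum_abs_sub_inv_card_le {ι : Type*} [Fintype ι] {c : ι → ℝ}
    {β δ : ℝ} (hc : ∀ j, |c j - β| ≤ δ) (hcard : Fintype.card ι * (β + δ) ≤ 1) :
    (1 - ∑ j, c j) + ∑ j, |c j - (Fintype.card ι : ℝ)⁻¹|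
      ≤ 2 * (1 - Fintype.card ι * (β + δ)) + 4 * Fintype.card ι * δ := by
  set P : ℝ := (Fintype.card ι : ℝ)
  have hsum : P * (β - δ) ≤ ∑ j, c j := by
    simpa using Finset.card_nsmul_le_sum Finset.univ c (β - δ)
      fun j _ => by linarith [(abs_le.1 (hc j)).1]
  have habs : ∑ j, |c j - P⁻¹| ≤ P * (δ + (P⁻¹ - β)) := by
    refine (Finset.sum_le_card_nsmul Finset.univ _ (δ + (P⁻¹ - β)) fun j _ => ?_).trans_eq
      (by rw [Finset.card_univ, nsmul_eq_mul])
    have hP : 1 ≤ P := Nat.one_le_cast.2 (Fintype.card_pos_iff.2 ⟨j⟩)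
    have hβ : β ≤ P⁻¹ := by
      rw [← one_div, le_div_iff₀ (by linarith)]
      nlinarith [(abs_nonneg _).trans (hc j)]
    calc |c j - P⁻¹| ≤ |c j - β| + |β - P⁻¹| := abs_sub_le _ _ _
      _ ≤ δ + (P⁻¹ - β) := by
          rw [abs_sub_comm β P⁻¹, abs_of_nonneg (sub_nonneg.2 hβ)]
          linarith [hc j]
  have hPinv : P * P⁻¹ ≤ 1 := mul_inv_le_one
  nlinarith

theorem norm_integral_sub_average_le_of_abs_sub_le [IsProbabilityMeasure μ] {ι : Type*}
    [Fintype ι] {G : ι → Set X} (hG : ∀ j, MeasurableSet (G j))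
    (hdisj : Pairwise (Disjoint on G)) {β δ : ℝ} (hnear : ∀ j, |μ.real (G j) - β| ≤ δ)
    (hcard : Fintype.card ι * (β + δ) ≤ 1) {T : X → ℂ} (hT : AEStronglyMeasurable T μ)
    (hT1 : ∀ᵐ x ∂μ, ‖T x‖ ≤ 1) :
    ‖∫ x, T x ∂μ - (Fintype.card ι : ℂ)⁻¹ * ∑ j, (μ.real (G j) : ℂ)⁻¹ * ∫ x in G j, T x ∂μ‖
      ≤ 2 * (1 - Fintype.card ι * (β + δ)) + 4 * Fintype.card ι * δ :=
  calc _ ≤ μ.real (⋃ j, G j)ᶜ + ∑ j, |μ.real (G j) - (Fintype.card ι : ℝ)⁻¹| := by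
        simpa using norm_integral_sub_mul_sum_inv_mul_setIntegral_le hG hdisj hT hT1
          (Fintype.card ι : ℝ)⁻¹
    _ = (1 - ∑ j, μ.real (G j)) + ∑ j, |μ.real (G j) - (Fintype.card ι : ℝ)⁻¹| := by
        rw [probReal_compl_eq_one_sub (.iUnion hG), measureReal_iUnion_fintype hdisj hG]
    _ ≤ _ := one_sub_sum_add_sum_abs_sub_inv_card_le hnear hcard

theorem strong_foelner_condition_general
    {X : Type} [MeasurableSpace X] [StandardBorelSpace X]
    (μ : Measure X) [IsProbabilityMeasure μ] [NullSingletonClass μ]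
    (𝓑 : Set (Set X))
    (hmeas : ∀ B ∈ 𝓑, MeasurableSet B)
    (hcompl : ∀ B ∈ 𝓑, Bᶜ ∈ 𝓑)
    (hinter : ∀ B ∈ 𝓑, ∀ C ∈ 𝓑, B ∩ C ∈ 𝓑)
    (hdense : ∀ A : Set X, MeasurableSet A → ∀ ε : ℝ, 0 < ε →
      ∃ B ∈ 𝓑, (μ (symmDiff A B)).toReal < ε)
    (s : ℕ) (F : Fin s → Set X) (hF : ∀ i, F i ∈ 𝓑)
    (hFdisj : Pairwise (Function.onFun Disjoint F))
    (hFcover : (⋃ i, F i) = Set.univ)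
    (ε : ℝ) (hε : 0 < ε) :
    ∃ (p : ℕ), 1 ≤ p ∧ ∃ G : Fin p → Set X,
      (∀ j, G j ∈ 𝓑) ∧
      Pairwise (Function.onFun Disjoint G) ∧
      (∀ j, 0 < μ (G j)) ∧
      (∀ j, ∃ i, G j ⊆ F i) ∧
      ∀ T : X → ℂ, Measurable T → (∀ᵐ x ∂μ, ‖T x‖ ≤ 1) →
        ‖(∫ x, T x ∂μ) -
            (p : ℂ)⁻¹ * ∑ j : Fin p, ((μ (G j)).toReal : ℂ)⁻¹ * ∫ x in G j, T x ∂μ‖ ≤ ε := by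
  have h𝓑 : μ.MeasureDense 𝓑 := Measure.measureDense_of_measureReal_symmDiff_lt hmeas hdense
  set ε' := min ε 1
  have hε' : 0 < ε' := lt_min hε one_pos
  have hε'1 : ε' ≤ 1 := min_le_right ε 1
  set q := ε' / (4 * s + 1)
  set δ := ε' * q / 8 with hδ
  have hq : 0 < q := by positivity
  have hδq : δ ≤ q / 8 := by rw [hδ]; nlinarith
  have hsq : s * q ≤ ε' / 4 := by
    rw [mul_div_assoc', div_le_div_iff₀ (by positivity) (by norm_num)]
    nlinarith
  obtain ⟨p, G, hG𝓑, hGdisj, hGF, hGnear, hpq, hpsq⟩ :=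
    exists_fin_refinement_abs_measureReal_sub_le h𝓑 hcompl hinter hF hFdisj
      (τ := q - δ) (δ := δ) (by linarith) (by positivity)
  rw [sub_add_cancel, hFcover, probReal_univ] at hpq hpsq
  have hp : 1 ≤ p := by
    have : (0 : ℝ) < p := by nlinarith
    exact_mod_cast this
  refine ⟨p, hp, G, hG𝓑, hGdisj, fun j => ?_, hGF, fun T hT hT1 => ?_⟩
  · have hGj : 0 < μ.real (G j) := by linarith [(abs_le.1 (hGnear j)).1]
    exact (ENNReal.toReal_pos_iff.1 hGj).1
  have huncovered : 1 - p * q ≤ s * q := by linarith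
  have hpδ : 4 * p * δ ≤ ε' / 2 := by rw [hδ]; nlinarith
  calc _ ≤ 2 * (1 - p * q) + 4 * p * δ := by
        simpa [measureReal_def] using norm_integral_sub_average_le_of_abs_sub_le
          (fun j => h𝓑.measurable _ (hG𝓑 j)) hGdisj hGnear (by simpa using hpq)
          hT.aestronglyMeasurable hT1
    _ ≤ ε := by linarith [min_le_left ε 1]

/-- The strong Følner condition for the algebra generated by a measure-dense
system of Borel sets: given a finite partition `F₁, …, F_s ∈ 𝓑` of `X` into sets of positive
measure and `ε > 0`, there are finitely many pairwise disjoint positive-measure sets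
`G₁, …, G_p ∈ 𝓑`, each contained in some `F_i`, such that the normalized average of the
normalized integrals over the `G_j` approximates the integral against `μ` up to `ε`,
uniformly over all measurable `T : X → ℂ` bounded a.e. by `1`. -/
theorem strong_foelner_condition
    {X : Type} [MeasurableSpace X] [StandardBorelSpace X]
    (μ : Measure X) [IsProbabilityMeasure μ] [NullSingletonClass μ]
    (𝓑 : Set (Set X))
    (hmeas : ∀ B ∈ 𝓑, MeasurableSet B)
    (hcompl : ∀ B ∈ 𝓑, Bᶜ ∈ 𝓑)
    (hinter : ∀ B ∈ 𝓑, ∀ C ∈ 𝓑, B ∩ C ∈ 𝓑)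
    (hdense : ∀ A : Set X, MeasurableSet A → ∀ ε : ℝ, 0 < ε →
      ∃ B ∈ 𝓑, (μ (symmDiff A B)).toReal < ε)
    (s : ℕ) (F : Fin s → Set X) (hF : ∀ i, F i ∈ 𝓑)
    (hFdisj : Pairwise (Function.onFun Disjoint F))
    (hFcover : (⋃ i, F i) = Set.univ)
    (hFpos : ∀ i, 0 < μ (F i))
    (ε : ℝ) (hε : 0 < ε) :
    ∃ (p : ℕ), 1 ≤ p ∧ ∃ G : Fin p → Set X,
      (∀ j, G j ∈ 𝓑) ∧
      Pairwise (Function.onFun Disjoint G) ∧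
      (∀ j, 0 < μ (G j)) ∧
      (∀ j, ∃ i, G j ⊆ F i) ∧
      ∀ T : X → ℂ, Measurable T → (∀ᵐ x ∂μ, ‖T x‖ ≤ 1) →
        ‖(∫ x, T x ∂μ) -
            (p : ℂ)⁻¹ * ∑ j : Fin p, ((μ (G j)).toReal : ℂ)⁻¹ * ∫ x in G j, T x ∂μ‖ ≤ ε :=
  strong_foelner_condition_general μ 𝓑 hmeas hcompl hinter hdense s F hF hFdisj hFcover ε hε
end

section
/- Let (X, μ) be a standard non-atomic Borel probability space and let 𝓑 be a measure-dense system of Borel subsets of X. Let F₁, …, F_s ∈ 𝓑 be a partition of X into sets of positive measure and let δ ∈ (0, 1]. Then there exist an integer q ≥ 1, non-negative integers p₁, …, p_s with 0 ≤ μ(F_i) − p_i/q < δ/(2s) for every i, and, setting p = p₁ + ⋯ + p_s (so that p ≥ 1 and 1 − p/q ≤ δ/2), for each i pairwise disjoint sets G_{i,1}, …, G_{i,p_i} ∈ 𝓑 contained in F_i, such that |μ(G_{i,j}) − 1/q| ≤ δ/(2 s p q) for all i, j, and μ(F_i \ (G_{i,1} ∪ ⋯ ∪ G_{i,p_i}))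 ≤ δ/s for every i. In particular, the sets G_{i,j} are pairwise disjoint, each has measure within δ/(2spq) of 1/q, and their union covers X up to a set of measure at most δ. -/
/-!
By Sierpiński's theorem a non-atomic finite measure on a standard Borel space takes every value
between `0` and `μ F` on measurable subsets of `F`; with measure-density this lets one carve out
of any `F ∈ 𝓑` disjoint sets of `𝓑` whose measures are arbitrarily close to a prescribed `t`, as
long as room remains. Taking `q > 2s/δ` and `pᵢ = ⌊q μ(Fᵢ)⌋`, carve `pᵢ` such sets of measure
`≈ 1/q` out of each `Fᵢ`: rounding loses less than `1/q` per part, and the approximation errors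
add up to at most `pᵢ` times the tolerance.
-/

open MeasureTheory Set Filter Topology Function
open scoped ENNReal symmDiff

theorem Fin.pairwise_disjoint_cons {α : Type*} [PartialOrder α] [OrderBot α] {n : ℕ} {a : α}
    {f : Fin n → α} (ha : ∀ j, Disjoint a (f j)) (hf : Pairwise (Disjoint on f)) :
    Pairwise (Disjoint on (Fin.cons a f : Fin (n + 1) → α)) := by
  intro i j hij
  cases i using Fin.cases <;> cases j using Fin.cases
  · exact absurd rfl hij
  · exact ha _
  · exact (ha _).symm
  · exact hf (ne_of_apply_ne Fin.succ hij)

theorem pairwise_disjoint_sigma_of_subset {α ι : Type*} {κ : ι → Type*} {F : ι → Set α}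
    {G : ∀ i, κ i → Set α} (hF : Pairwise (Disjoint on F)) (hGF : ∀ i j, G i j ⊆ F i)
    (hG : ∀ i, Pairwise (Disjoint on G i)) :
    Pairwise (Disjoint on fun x : Σ i, κ i ↦ G x.1 x.2) := by
  rintro ⟨i, j⟩ ⟨i', j'⟩ hne
  rcases eq_or_ne i i' with rfl | hii
  · exact hG i fun hjj ↦ hne (congrArg (Sigma.mk i) hjj)
  · exact (hF hii).mono (hGF i j) (hGF i' j')

theorem compl_iUnion_subset_iUnion_sdiff {α ι : Type*} {F : ι → Set α} (hF : ⋃ i, F i = univ)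
    (H : ι → Set α) : (⋃ i, H i)ᶜ ⊆ ⋃ i, F i \ H i := fun x hx ↦ by
  obtain ⟨i, hi⟩ := mem_iUnion.1 (hF ▸ mem_univ x)
  exact mem_iUnion.2 ⟨i, hi, fun h ↦ hx (mem_iUnion.2 ⟨i, h⟩)⟩

theorem exists_nat_div_approx {s : ℕ} (hs : s ≠ 0) {ν : Fin s → ℝ} (hν : ∀ i, 0 ≤ ν i)
    (hsum : 1 ≤ ∑ i, ν i) {δ : ℝ} (hδ : 0 < δ) :
    ∃ q : ℕ, 1 ≤ q ∧ ∃ p : Fin s → ℕ,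
      (∀ i, 0 ≤ ν i - p i / q ∧ ν i - p i / q < δ / (2 * s)) ∧
      1 ≤ ∑ i, p i ∧ 1 - ((∑ i, p i : ℕ) : ℝ) / q ≤ δ / 2 := by
  have hs0 : (0 : ℝ) < s := by positivity
  set q := ⌈2 * s / δ⌉₊ + s
  have hsq : (s : ℝ) < q := by
    exact_mod_cast Nat.lt_add_of_pos_left (Nat.ceil_pos.2 (by positivity))
  have hq0 : (0 : ℝ) < q := hs0.trans hsq
  have hδq : 2 * s < δ * q := by
    have := (div_le_iff₀ hδ).1 (Nat.le_ceil (2 * s / δ))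
    simp only [q]; push_cast; nlinarith
  set p : Fin s → ℕ := fun i ↦ ⌊q * ν i⌋₊
  have hp i : (p i : ℝ) ≤ q * ν i ∧ q * ν i < p i + 1 :=
    ⟨Nat.floor_le (by have := hν i; positivity), Nat.lt_floor_add_one _⟩
  have hP : (q : ℝ) - s < ((∑ i, p i : ℕ) : ℝ) := by
    have hlt := Finset.sum_lt_sum_of_nonempty (Finset.univ_nonempty_iff.2 ⟨⟨0, by omega⟩⟩)
      fun i (_ : i ∈ Finset.univ) ↦ show q * ν i - 1 < p i by linarith [hp i]
    rw [Finset.sum_sub_distrib, ← Finset.mul_sum] at hlt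
    simp only [Finset.sum_const, Finset.card_univ, Fintype.card_fin, nsmul_eq_mul, mul_one] at hlt
    push_cast
    nlinarith
  refine ⟨q, by omega, p, fun i ↦ ⟨?_, ?_⟩, ?_, ?_⟩
  · rw [sub_nonneg, div_le_iff₀ hq0]; linarith [hp i]
  · calc ν i - p i / q < 1 / q := by
          rw [sub_lt_iff_lt_add, ← add_div, lt_div_iff₀ hq0]; linarith [hp i]
      _ < δ / (2 * s) := by rw [div_lt_div_iff₀ hq0 (by positivity)]; linarith
  · exact_mod_cast (show (0 : ℝ) < ∑ i, p i by linarith)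
  · rw [one_sub_div hq0.ne', div_le_iff₀ hq0]
    linarith

theorem continuous_measureReal_Iic (ν : Measure ℝ) [IsFiniteMeasure ν] [NullSingletonClass ν] :
    Continuous fun x ↦ ν.real (Iic x) := by
  refine continuous_iff_continuousAt.2 fun b ↦ tendsto_iff_dist_tendsto_zero.2 ?_
  have hIcc : Tendsto (fun x ↦ ν.real (Icc (b - |x - b|) (b + |x - b|))) (𝓝 b) (𝓝 0) :=
    (ENNReal.tendsto_toReal ENNReal.zero_ne_top).comp <| (tendsto_measure_Icc ν b).comp
      ((continuous_sub_right b).abs.tendsto' b 0 (by simp))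
  refine squeeze_zero (fun _ ↦ dist_nonneg) (fun x ↦ ?_) hIcc
  calc dist (ν.real (Iic x)) (ν.real (Iic b))
      ≤ ν.real (Iic x ∆ Iic b) := abs_measureReal_sub_le_measureReal_symmDiff
        measurableSet_Iic.nullMeasurableSet measurableSet_Iic.nullMeasurableSet
    _ ≤ ν.real (Icc (b - |x - b|) (b + |x - b|)) := by
      refine measureReal_mono fun y hy ↦ ?_
      simp only [mem_symmDiff, mem_Iic, mem_Icc] at hy ⊢
      constructor <;> cases abs_cases (x - b) <;> grind

theorem exists_measure_Iic_eq (ν : Measure ℝ) [IsFiniteMeasure ν] [NullSingletonClass ν]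
    {r : ℝ≥0∞} (hr0 : 0 < r) (hr : r < ν univ) : ∃ c, ν (Iic c) = r := by
  have hr_top : r ≠ ∞ := (hr.trans_le le_top).ne
  have hbot : Tendsto (fun x ↦ ν (Iic x)) atBot (𝓝 0) := by
    have h := tendsto_measure_iInter_atBot (μ := ν) (fun x ↦ measurableSet_Iic.nullMeasurableSet)
      (fun _ _ ↦ Iic_subset_Iic.2) ⟨0, measure_ne_top ν _⟩
    have hempty : ⋂ x : ℝ, Iic x = ∅ := eq_empty_of_forall_notMem fun y hy ↦ by
      linarith [mem_Iic.1 (mem_iInter.1 hy (y - 1))]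
    rwa [hempty, measure_empty] at h
  obtain ⟨a, ha⟩ := (hbot.eventually (gt_mem_nhds hr0)).exists
  obtain ⟨b, hb⟩ := ((tendsto_measure_Iic_atTop ν).eventually (lt_mem_nhds hr)).exists
  obtain ⟨c, hc⟩ := mem_range_of_exists_le_of_exists_ge (continuous_measureReal_Iic ν)
    ⟨a, (ENNReal.toReal_le_toReal (measure_ne_top ν _) hr_top).2 ha.le⟩
    ⟨b, (ENNReal.toReal_le_toReal hr_top (measure_ne_top ν _)).2 hb.le⟩
  exact ⟨c, (ENNReal.toReal_eq_toReal_iff' (measure_ne_top ν _) hr_top).1 hc⟩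

section StandardBorel

variable {X : Type*} [MeasurableSpace X] [StandardBorelSpace X] (μ : Measure X)
  [IsFiniteMeasure μ] [NullSingletonClass μ]

theorem exists_measurableSet_measure_eq {r : ℝ≥0∞} (hr : r ≤ μ univ) :
    ∃ A, MeasurableSet A ∧ μ A = r := by
  rcases eq_or_ne r 0 with rfl | hr0
  · exact ⟨∅, .empty, measure_empty⟩
  rcases hr.eq_or_lt with rfl | hr
  · exact ⟨univ, .univ, rfl⟩
  obtain ⟨f, hf⟩ := exists_measurableEmbedding_real X
  have : NullSingletonClass (μ.map f) := ⟨fun y ↦ by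
    rw [hf.map_apply]
    exact Subsingleton.measure_zero (fun a ha b hb ↦ hf.injective (ha.trans hb.symm)) μ⟩
  obtain ⟨c, hc⟩ := exists_measure_Iic_eq (μ.map f) (pos_iff_ne_zero.2 hr0)
    (by rwa [hf.map_apply, preimage_univ])
  exact ⟨f ⁻¹' Iic c, hf.measurable measurableSet_Iic, by rwa [hf.map_apply] at hc⟩

theorem exists_subset_measure_eq {F : Set X} (hF : MeasurableSet F) {r : ℝ≥0∞} (hr : r ≤ μ F) :
    ∃ A ⊆ F, MeasurableSet A ∧ μ A = r := by
  obtain ⟨A, hA, hAr⟩ := exists_measurableSet_measure_eq (μ.restrict F)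
    (hr.trans_eq (Measure.restrict_apply_univ F).symm)
  exact ⟨A ∩ F, inter_subset_right, hA.inter hF, by rwa [Measure.restrict_apply hA] at hAr⟩

end StandardBorel

theorem measureReal_sdiff_iUnion_le {X ι : Type*} [MeasurableSpace X] {μ : Measure X}
    [IsFiniteMeasure μ] [Fintype ι] {F : Set X} {G : ι → Set X} (hG : ∀ j, MeasurableSet (G j))
    (hGF : ∀ j, G j ⊆ F) (hdisj : Pairwise (Disjoint on G)) {a : ℝ}
    (ha : ∀ j, a ≤ μ.real (G j)) :
    μ.real (F \ ⋃ j, G j) ≤ μ.real F - Fintype.card ι * a := by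
  rw [measureReal_sdiff (iUnion_subset hGF) (.iUnion hG), measureReal_iUnion_fintype hdisj hG]
  have := Finset.sum_le_sum fun j (_ : j ∈ Finset.univ) ↦ ha j
  simp only [Finset.sum_const, Finset.card_univ, nsmul_eq_mul] at this
  linarith

theorem measureReal_compl_iUnion_le {X ι : Type*} [MeasurableSpace X] {μ : Measure X}
    [IsFiniteMeasure μ] [Fintype ι] {F H : ι → Set X} (hF : ⋃ i, F i = univ) {b : ℝ}
    (hb : ∀ i, μ.real (F i \ H i) ≤ b) : μ.real (⋃ i, H i)ᶜ ≤ Fintype.card ι * b :=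
  calc μ.real (⋃ i, H i)ᶜ
      ≤ μ.real (⋃ i, F i \ H i) := measureReal_mono (compl_iUnion_subset_iUnion_sdiff hF H)
    _ ≤ ∑ i, μ.real (F i \ H i) := measureReal_iUnion_fintype_le _
    _ ≤ Fintype.card ι * b := by simpa using Finset.sum_le_sum fun i (_ : i ∈ Finset.univ) ↦ hb i

structure IsMeasureDense {X : Type*} [MeasurableSpace X] (μ : Measure X) (𝓑 : Set (Set X)) :
    Prop where
  measurableSet : ∀ B ∈ 𝓑, MeasurableSet B
  compl_mem : ∀ B ∈ 𝓑, Bᶜ ∈ 𝓑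
  inter_mem : ∀ B ∈ 𝓑, ∀ C ∈ 𝓑, B ∩ C ∈ 𝓑
  exists_mem_measureReal_symmDiff_lt :
    ∀ A, MeasurableSet A → ∀ ε : ℝ, 0 < ε → ∃ B ∈ 𝓑, μ.real (A ∆ B) < ε

namespace IsMeasureDense

variable {X : Type*} [MeasurableSpace X] [StandardBorelSpace X] {μ : Measure X}
  [IsFiniteMeasure μ] [NullSingletonClass μ] {𝓑 : Set (Set X)}

theorem exists_mem_subset_abs_measureReal_sub_lt (h𝓑 : IsMeasureDense μ 𝓑) {F : Set X}
    (hF : F ∈ 𝓑) {t ε : ℝ} (ht : 0 ≤ t) (htF : t ≤ μ.real F) (hε : 0 < ε) :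
    ∃ G ∈ 𝓑, G ⊆ F ∧ |μ.real G - t| < ε := by
  obtain ⟨A, hAF, hA, hAt⟩ :=
    exists_subset_measure_eq μ (h𝓑.measurableSet F hF) (ENNReal.ofReal_le_of_le_toReal htF)
  have hAt' : μ.real A = t := by rw [measureReal_def, hAt, ENNReal.toReal_ofReal ht]
  obtain ⟨B, hB, hAB⟩ := h𝓑.exists_mem_measureReal_symmDiff_lt A hA ε hε
  have hBF := h𝓑.inter_mem B hB F hF
  refine ⟨B ∩ F, hBF, inter_subset_right, ?_⟩
  have hsub : (B ∩ F) ∆ A ⊆ A ∆ B := fun x hx ↦ by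
    simp only [mem_symmDiff, mem_inter_iff] at hx ⊢
    have := @hAF x
    tauto
  calc |μ.real (B ∩ F) - t|
      ≤ μ.real ((B ∩ F) ∆ A) := hAt' ▸ abs_measureReal_sub_le_measureReal_symmDiff
        (h𝓑.measurableSet _ hBF).nullMeasurableSet hA.nullMeasurableSet
    _ ≤ μ.real (A ∆ B) := measureReal_mono hsub
    _ < ε := hAB

theorem exists_pairwise_disjoint_abs_measureReal_sub_lt (h𝓑 : IsMeasureDense μ 𝓑) {t ε : ℝ}
    (ht : 0 ≤ t) (hε : 0 < ε) (n : ℕ) {F : Set X} (hF : F ∈ 𝓑) (hnF : n * (t + ε) ≤ μ.real F) :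
    ∃ G : Fin n → Set X, (∀ j, G j ∈ 𝓑) ∧ (∀ j, G j ⊆ F) ∧ Pairwise (Disjoint on G) ∧
      ∀ j, |μ.real (G j) - t| < ε := by
  induction n generalizing F with
  | zero => exact ⟨Fin.elim0, fun j ↦ j.elim0, fun j ↦ j.elim0, fun j ↦ j.elim0, fun j ↦ j.elim0⟩
  | succ n ih =>
    push_cast at hnF
    obtain ⟨G₀, hG₀, hG₀F, hG₀t⟩ :=
      h𝓑.exists_mem_subset_abs_measureReal_sub_lt hF ht (by nlinarith) hε
    have hF' : F ∩ G₀ᶜ ∈ 𝓑 := h𝓑.inter_mem F hF G₀ᶜ (h𝓑.compl_mem G₀ hG₀)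
    have hμF' : μ.real (F ∩ G₀ᶜ) = μ.real F - μ.real G₀ := by
      rw [← sdiff_eq, measureReal_sdiff hG₀F (h𝓑.measurableSet G₀ hG₀)]
    obtain ⟨G, hG, hGF, hGdisj, hGt⟩ :=
      ih hF' (by rw [hμF']; linarith [(abs_lt.1 hG₀t).2])
    refine ⟨Fin.cons G₀ G, Fin.cases hG₀ hG, Fin.cases hG₀F fun j ↦ (hGF j).trans inter_subset_left,
      Fin.pairwise_disjoint_cons
        (fun j ↦ disjoint_compl_right.mono_right ((hGF j).trans inter_subset_right)) hGdisj,
      Fin.cases hG₀t hGt⟩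

theorem exists_pairwise_disjoint_measureReal_sdiff_iUnion_le (h𝓑 : IsMeasureDense μ 𝓑)
    {t ε : ℝ} (hε : 0 < ε) (hεt : ε ≤ 2 * t) (n : ℕ) {F : Set X} (hF : F ∈ 𝓑)
    (hnF : n * t ≤ μ.real F) :
    ∃ G : Fin n → Set X, (∀ j, G j ∈ 𝓑) ∧ (∀ j, G j ⊆ F) ∧ Pairwise (Disjoint on G) ∧
      (∀ j, |μ.real (G j) - t| ≤ ε) ∧ μ.real (F \ ⋃ j, G j) ≤ μ.real F - n * (t - ε) := by
  -- aim at `t - ε / 2` with tolerance `ε / 2`, so that the room needed is exactly `n * t`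
  obtain ⟨G, hG, hGF, hGdisj, hGt⟩ := h𝓑.exists_pairwise_disjoint_abs_measureReal_sub_lt
    (t := t - ε / 2) (ε := ε / 2) (by linarith) (by positivity) n hF (by rwa [sub_add_cancel])
  have hGt' j : |μ.real (G j) - t| ≤ ε := by
    have := abs_lt.1 (hGt j)
    exact abs_le.2 ⟨by linarith, by linarith⟩
  refine ⟨G, hG, hGF, hGdisj, hGt', ?_⟩
  simpa using measureReal_sdiff_iUnion_le (fun j ↦ h𝓑.measurableSet _ (hG j)) hGF hGdisj
    fun j ↦ by linarith [(abs_le.1 (hGt' j)).1]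

end IsMeasureDense

theorem approximate_equipartition_general
    {X : Type} [MeasurableSpace X] [StandardBorelSpace X]
    (μ : Measure X) [IsProbabilityMeasure μ] [NullSingletonClass μ]
    (𝓑 : Set (Set X))
    (hmeas : ∀ B ∈ 𝓑, MeasurableSet B)
    (hcompl : ∀ B ∈ 𝓑, Bᶜ ∈ 𝓑)
    (hinter : ∀ B ∈ 𝓑, ∀ C ∈ 𝓑, B ∩ C ∈ 𝓑)
    (hdense : ∀ A : Set X, MeasurableSet A → ∀ ε : ℝ, 0 < ε →
      ∃ B ∈ 𝓑, (μ (symmDiff A B)).toReal < ε)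
    (s : ℕ) (F : Fin s → Set X) (hF : ∀ i, F i ∈ 𝓑)
    (hFdisj : Pairwise (Function.onFun Disjoint F))
    (hFcover : (⋃ i, F i) = Set.univ)
    (δ : ℝ) (hδ0 : 0 < δ) (hδ1 : δ ≤ 1) :
    ∃ (q : ℕ), 1 ≤ q ∧ ∃ p : Fin s → ℕ,
      (∀ i, 0 ≤ (μ (F i)).toReal - (p i : ℝ) / q ∧
        (μ (F i)).toReal - (p i : ℝ) / q < δ / (2 * s)) ∧
      1 ≤ ∑ i, p i ∧
      1 - ((∑ i, p i : ℕ) : ℝ) / q ≤ δ / 2 ∧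
      ∃ G : (i : Fin s) → Fin (p i) → Set X,
        (∀ i j, G i j ∈ 𝓑) ∧
        (∀ i j, G i j ⊆ F i) ∧
        (∀ i, Pairwise (Function.onFun Disjoint (G i))) ∧
        (∀ i j, |(μ (G i j)).toReal - 1 / q| ≤
          δ / (2 * s * ((∑ i, p i : ℕ) : ℝ) * q)) ∧
        (∀ i, (μ (F i \ ⋃ j, G i j)).toReal ≤ δ / s) ∧
        Pairwise (Function.onFun Disjoint
          (fun x : Σ i : Fin s, Fin (p i) => G x.1 x.2)) ∧
        (μ (⋃ i, ⋃ j, G i j)ᶜ).toReal ≤ δ := by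
  have h𝓑 : IsMeasureDense μ 𝓑 := ⟨hmeas, hcompl, hinter, hdense⟩
  have hs : s ≠ 0 := by
    rintro rfl
    simpa [← hFcover] using measure_univ (μ := μ)
  have hsum : 1 ≤ ∑ i, μ.real (F i) := by
    simpa [hFcover] using measureReal_iUnion_fintype_le (μ := μ) F
  obtain ⟨q, hq, p, hp, hP, hPq⟩ := exists_nat_div_approx hs (fun i ↦ measureReal_nonneg) hsum hδ0
  set P := ∑ i, p i
  set ε := δ / (2 * s * P * q)
  have hs1 : (1 : ℝ) ≤ s := by exact_mod_cast Nat.one_le_iff_ne_zero.2 hs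
  have hP1 : (1 : ℝ) ≤ P := by exact_mod_cast hP
  have hq1 : (1 : ℝ) ≤ q := by exact_mod_cast hq
  have hε : 0 < ε := by positivity
  have hεq : ε ≤ 2 * (1 / q) := by
    rw [mul_one_div, div_le_div_iff₀ (by positivity) (by positivity)]
    nlinarith [mul_le_mul hs1 hP1 zero_le_one (by positivity)]
  have hPε : P * ε ≤ δ / (2 * s) := by
    rw [show P * ε = δ / (2 * s) / q by simp only [ε]; field_simp]
    exact div_le_self (by positivity) hq1
  choose G hG𝓑 hGF hGdisj hGq hGrem using fun i ↦
    h𝓑.exists_pairwise_disjoint_measureReal_sdiff_iUnion_le hε hεq (p i) (hF i)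
      (by linarith [(hp i).1, mul_one_div (p i : ℝ) q])
  have hrem i : μ.real (F i \ ⋃ j, G i j) ≤ δ / s := by
    have hpP : (p i : ℝ) ≤ P := mod_cast Finset.single_le_sum (by simp) (Finset.mem_univ i)
    have : (p i : ℝ) * ε ≤ P * ε := mul_le_mul_of_nonneg_right hpP hε.le
    have h2s : δ / (2 * s) + δ / (2 * s) = δ / s := by field_simp; ring
    linarith [hGrem i, (hp i).2, mul_one_div (p i : ℝ) q]
  refine ⟨q, hq, p, hp, hP, hPq, G, hG𝓑, hGF, hGdisj, hGq, hrem,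
    pairwise_disjoint_sigma_of_subset hFdisj hGF hGdisj, ?_⟩
  exact (measureReal_compl_iUnion_le hFcover hrem).trans_eq (by simp; field_simp)

/-- Given a measure-dense system `𝓑` of Borel sets in a standard non-atomic
Borel probability space, a finite partition `F₁, …, F_s ∈ 𝓑` of `X` into sets of positive
measure, and `δ ∈ (0, 1]`, one can find `q ≥ 1`, integers `pᵢ` with
`0 ≤ μ(Fᵢ) - pᵢ/q < δ/(2s)`, and (writing `p = p₁ + ⋯ + p_s`, so `p ≥ 1` and
`1 - p/q ≤ δ/2`) for each `i` pairwise disjoint sets `G_{i,1}, …, G_{i,pᵢ} ∈ 𝓑` contained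
in `Fᵢ` with `|μ(G_{i,j}) - 1/q| ≤ δ/(2spq)` and `μ(Fᵢ \ ⋃ⱼ G_{i,j}) ≤ δ/s`.  In particular
the `G_{i,j}` are pairwise disjoint and their union covers `X` up to measure at most `δ`. -/
theorem approximate_equipartition
    {X : Type} [MeasurableSpace X] [StandardBorelSpace X]
    (μ : Measure X) [IsProbabilityMeasure μ] [NullSingletonClass μ]
    (𝓑 : Set (Set X))
    (hmeas : ∀ B ∈ 𝓑, MeasurableSet B)
    (hcompl : ∀ B ∈ 𝓑, Bᶜ ∈ 𝓑)
    (hinter : ∀ B ∈ 𝓑, ∀ C ∈ 𝓑, B ∩ C ∈ 𝓑)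
    (hdense : ∀ A : Set X, MeasurableSet A → ∀ ε : ℝ, 0 < ε →
      ∃ B ∈ 𝓑, (μ (symmDiff A B)).toReal < ε)
    (s : ℕ) (F : Fin s → Set X) (hF : ∀ i, F i ∈ 𝓑)
    (hFdisj : Pairwise (Function.onFun Disjoint F))
    (hFcover : (⋃ i, F i) = Set.univ)
    (hFpos : ∀ i, 0 < μ (F i))
    (δ : ℝ) (hδ0 : 0 < δ) (hδ1 : δ ≤ 1) :
    ∃ (q : ℕ), 1 ≤ q ∧ ∃ p : Fin s → ℕ,
      (∀ i, 0 ≤ (μ (F i)).toReal - (p i : ℝ) / q ∧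
        (μ (F i)).toReal - (p i : ℝ) / q < δ / (2 * s)) ∧
      1 ≤ ∑ i, p i ∧
      1 - ((∑ i, p i : ℕ) : ℝ) / q ≤ δ / 2 ∧
      ∃ G : (i : Fin s) → Fin (p i) → Set X,
        (∀ i j, G i j ∈ 𝓑) ∧
        (∀ i j, G i j ⊆ F i) ∧
        (∀ i, Pairwise (Function.onFun Disjoint (G i))) ∧
        (∀ i j, |(μ (G i j)).toReal - 1 / q| ≤
          δ / (2 * s * ((∑ i, p i : ℕ) : ℝ) * q)) ∧
        (∀ i, (μ (F i \ ⋃ j, G i j)).toReal ≤ δ / s) ∧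
        Pairwise (Function.onFun Disjoint
          (fun x : Σ i : Fin s, Fin (p i) => G x.1 x.2)) ∧
        (μ (⋃ i, ⋃ j, G i j)ᶜ).toReal ≤ δ :=
  approximate_equipartition_general μ 𝓑 hmeas hcompl hinter hdense s F hF hFdisj hFcover δ hδ0 hδ1
end

section
/- Let A₀ be a finite cyclic group, Γ a countable set, and A = ⊕_Γ A₀ the direct sum of copies of A₀ indexed by Γ (a countable discrete torsion abelian group). Let Â denote the Pontryagin dual of A, a compact Hausdorff abelian topological group. For a ∈ A let ev_a : Â → ℂ denote the continuous function χ ↦ χ(a). Then inside the algebra C(Â, ℂ) of continuous complex-valued functions on Â, the ℂ-linear span of {ev_a : a ∈ A} is equal to the ℂ-linear span of the indicator functions {1_U : U ⊆ Â compact and open}. -/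
/-!
Each `χ ↦ χ m` takes values in the finitely many `n`-th roots of unity, `n` the order of `m`,
so it is a finite combination of the indicators of its level sets, which are clopen, hence
compact, in the compact group `Â`. Conversely, the span of the evaluations is a subalgebra
(`ev_m * ev_m' = ev_(m m')`). By Lagrange interpolation it contains the indicator of each level
set of each `ev_m`, and the sets whose indicator it contains are closed under finite unions
and intersections. Since `Â` carries the topology of pointwise convergence, the finite
intersections of level sets form a basis of clopen sets, so a compact open set is a finite union
of them.
-/

open Set Submodule Topology

section FiniteRange

variable {X : Type*} [TopologicalSpace X]

theorem Continuous.isClopen_preimage_singleton_of_finite_range {Y : Type*} [TopologicalSpace Y]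
    [T1Space Y] {f : X → Y} (hf : Continuous f) (hfin : (range f).Finite) (y : Y) :
    IsClopen (f ⁻¹' {y}) := by
  refine ⟨isClosed_singleton.preimage hf, ?_⟩
  have hcompl : f ⁻¹' {y} = (f ⁻¹' (range f \ {y}))ᶜ := by
    ext x; simp
  rw [hcompl]
  exact (hfin.sdiff.isClosed.preimage hf).isOpen_compl

variable (X) in
def compactOpenIndicators (𝕜 : Type*) [TopologicalSpace 𝕜] [Zero 𝕜] [One 𝕜] : Set C(X, 𝕜) :=
  {f | ∃ U : Set X, IsCompact U ∧ IsOpen U ∧ ⇑f = U.indicator 1}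

theorem ContinuousMap.mem_span_compactOpenIndicators_of_finite_range {𝕜 : Type*} [CommRing 𝕜]
    [TopologicalSpace 𝕜] [IsTopologicalRing 𝕜] [T1Space 𝕜] [CompactSpace X]
    (f : C(X, 𝕜)) (hfin : (range f).Finite) :
    f ∈ span 𝕜 (compactOpenIndicators X 𝕜) := by
  classical
  have hfiber := f.continuous.isClopen_preimage_singleton_of_finite_range hfin
  have hsum : f = ∑ z ∈ hfin.toFinset, z • (LocallyConstant.charFn 𝕜 (hfiber z) : C(X, 𝕜)) := by
    ext x
    simp [ContinuousMap.sum_apply, LocallyConstant.coe_charFn, Set.indicator_apply]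
  rw [hsum]
  refine sum_mem fun z _ => smul_mem _ _ (subset_span ⟨_, (hfiber z).isClosed.isCompact,
    (hfiber z).isOpen, LocallyConstant.coe_charFn 𝕜 (hfiber z)⟩)

end FiniteRange

namespace Subalgebra

variable {X : Type*} [TopologicalSpace X]

section CommRing

variable {𝕜 : Type*} [CommRing 𝕜] [TopologicalSpace 𝕜] [IsTopologicalRing 𝕜]
  (S : Subalgebra 𝕜 C(X, 𝕜))

def indicatorSets : Set (Set X) := {U | ∃ g ∈ S, ⇑g = U.indicator 1}

variable {S}

theorem univ_mem_indicatorSets : univ ∈ S.indicatorSets :=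
  ⟨1, S.one_mem, by simp⟩

theorem empty_mem_indicatorSets : ∅ ∈ S.indicatorSets :=
  ⟨0, S.zero_mem, by ext; simp⟩

theorem inter_mem_indicatorSets {U V : Set X} (hU : U ∈ S.indicatorSets)
    (hV : V ∈ S.indicatorSets) : U ∩ V ∈ S.indicatorSets := by
  obtain ⟨g, hgS, hg⟩ := hU
  obtain ⟨h, hhS, hh⟩ := hV
  exact ⟨g * h, S.mul_mem hgS hhS, by rw [ContinuousMap.coe_mul, hg, hh, inter_indicator_one]⟩

theorem union_mem_indicatorSets {U V : Set X} (hU : U ∈ S.indicatorSets)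
    (hV : V ∈ S.indicatorSets) : U ∪ V ∈ S.indicatorSets := by
  obtain ⟨g, hgS, hg⟩ := hU
  obtain ⟨h, hhS, hh⟩ := hV
  refine ⟨g + h - g * h, S.sub_mem (S.add_mem hgS hhS) (S.mul_mem hgS hhS), funext fun x => ?_⟩
  have hinter : U.indicator (1 : X → 𝕜) x * V.indicator 1 x = (U ∩ V).indicator 1 x := by
    rw [inter_indicator_one, Pi.mul_apply]
  simp only [ContinuousMap.sub_apply, ContinuousMap.add_apply, ContinuousMap.mul_apply,
    hg, hh, hinter]
  linear_combination -indicator_union_add_inter_apply (1 : X → 𝕜) U V x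

theorem biInter_mem_indicatorSets {ι : Type*} (t : Finset ι) {U : ι → Set X}
    (hU : ∀ i ∈ t, U i ∈ S.indicatorSets) : ⋂ i ∈ t, U i ∈ S.indicatorSets := by
  classical
  induction t using Finset.induction_on with
  | empty => simpa using univ_mem_indicatorSets
  | insert i t _ ih =>
    rw [Finset.set_biInter_insert]
    exact inter_mem_indicatorSets (hU i (t.mem_insert_self i))
      (ih fun j hj => hU j (Finset.mem_insert_of_mem hj))

theorem biUnion_mem_indicatorSets {ι : Type*} (t : Finset ι) {U : ι → Set X}
    (hU : ∀ i ∈ t, U i ∈ S.indicatorSets) : ⋃ i ∈ t, U i ∈ S.indicatorSets := by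
  classical
  induction t using Finset.induction_on with
  | empty => simpa using empty_mem_indicatorSets
  | insert i t _ ih =>
    rw [Finset.set_biUnion_insert]
    exact union_mem_indicatorSets (hU i (t.mem_insert_self i))
      (ih fun j hj => hU j (Finset.mem_insert_of_mem hj))

end CommRing

/-- Lagrange interpolation: the indicator of `f = z` is a polynomial in `f`. -/
theorem preimage_singleton_mem_indicatorSets {𝕜 : Type*} [Field 𝕜] [TopologicalSpace 𝕜]
    [IsTopologicalRing 𝕜] {S : Subalgebra 𝕜 C(X, 𝕜)} {f : C(X, 𝕜)} (hf : f ∈ S)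
    (hfin : (range f).Finite) (z : 𝕜) : f ⁻¹' {z} ∈ S.indicatorSets := by
  classical
  refine ⟨∏ w ∈ hfin.toFinset.erase z, (z - w)⁻¹ • (f - algebraMap 𝕜 _ w),
    prod_mem fun w _ => S.smul_mem (S.sub_mem hf (S.algebraMap_mem w)) _, funext fun x => ?_⟩
  simp only [ContinuousMap.coe_prod, Finset.prod_apply, ContinuousMap.smul_apply,
    ContinuousMap.sub_apply, _root_.algebraMap_apply, smul_eq_mul, mul_one]
  by_cases hx : f x = z
  · rw [indicator_of_mem (show x ∈ f ⁻¹' {z} from hx), hx]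
    exact Finset.prod_eq_one fun w hw =>
      inv_mul_cancel₀ (sub_ne_zero.2 (Finset.ne_of_mem_erase hw).symm)
  · rw [indicator_of_notMem (show x ∉ f ⁻¹' {z} from hx)]
    exact Finset.prod_eq_zero (i := f x) (by simp [hx]) (by simp)

end Subalgebra

namespace PontryaginDual

variable {M : Type*} [Monoid M] [TopologicalSpace M]

noncomputable def evalMonoidHom : M →* C(PontryaginDual M, ℂ) where
  toFun m := ⟨fun χ => χ m,
    continuous_subtype_val.comp (continuous_eval_const (F := M →ₜ* Circle) m)⟩
  map_one' := by ext; simp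
  map_mul' _ _ := by ext; simp

@[simp]
theorem evalMonoidHom_apply (m : M) (χ : PontryaginDual M) : evalMonoidHom m χ = χ m :=
  rfl

theorem finite_range_evalMonoidHom {m : M} (hm : IsOfFinOrder m) :
    (range (evalMonoidHom m : PontryaginDual M → ℂ)).Finite := by
  refine (Polynomial.nthRootsFinset (orderOf m) (1 : ℂ)).finite_toSet.subset ?_
  rintro _ ⟨χ, rfl⟩
  rw [Finset.mem_coe, Polynomial.mem_nthRootsFinset hm.orderOf_pos, evalMonoidHom_apply,
    ← Circle.coe_pow, ← map_pow, pow_orderOf_eq_one]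
  simp

theorem exists_finset_biInter_subset [DiscreteTopology M] {U : Set (PontryaginDual M)}
    (hU : IsOpen U) {χ : PontryaginDual M} (hχ : χ ∈ U) :
    ∃ F : Finset M, ⋂ m ∈ F, {η : PontryaginDual M | η m = χ m} ⊆ U := by
  obtain ⟨V, hV, rfl⟩ := ContinuousMonoidHom.isClosedEmbedding_coe.isInducing.isOpen_iff.1 hU
  obtain ⟨F, u, hu, hFV⟩ := isOpen_pi_iff.1 hV _ hχ
  refine ⟨F, fun η hη => hFV fun m hm => ?_⟩
  convert (hu m hm).2 using 1
  exact mem_iInter₂.1 hη m hm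

theorem setOf_apply_eq_eq_preimage_evalMonoidHom (m : M) (z : Circle) :
    {η : PontryaginDual M | η m = z} = evalMonoidHom m ⁻¹' {(z : ℂ)} := by
  ext η
  simp [Circle.coe_inj]

theorem toSubmodule_adjoin_range_evalMonoidHom :
    Subalgebra.toSubmodule (Algebra.adjoin ℂ (range (evalMonoidHom (M := M)))) =
      span ℂ (range evalMonoidHom) := by
  rw [Algebra.adjoin_eq_span, ← MonoidHom.coe_mrange, Submonoid.closure_eq]

theorem compactOpen_mem_indicatorSets_adjoin [DiscreteTopology M] (hM : IsMulTorsion M)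
    {U : Set (PontryaginDual M)} (hUc : IsCompact U) (hUo : IsOpen U) :
    U ∈ (Algebra.adjoin ℂ (range (evalMonoidHom (M := M)))).indicatorSets := by
  have hbasic (χ : PontryaginDual M) :
      ∃ F : Finset M, χ ∈ U → ⋂ m ∈ F, {η : PontryaginDual M | η m = χ m} ⊆ U := by
    by_cases hχ : χ ∈ U
    · exact (exists_finset_biInter_subset hUo hχ).imp fun _ hF _ => hF
    · exact ⟨∅, fun h => absurd h hχ⟩
  choose F hF using hbasic
  set B : PontryaginDual M → Set (PontryaginDual M) :=
    fun χ => ⋂ m ∈ F χ, {η : PontryaginDual M | η m = χ m}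
  have hB_nhds (χ : PontryaginDual M) : B χ ∈ 𝓝 χ := by
    refine (isOpen_biInter_finset fun m _ => ?_).mem_nhds (by simp)
    rw [setOf_apply_eq_eq_preimage_evalMonoidHom]
    exact ((evalMonoidHom m).continuous.isClopen_preimage_singleton_of_finite_range
      (finite_range_evalMonoidHom (hM m)) _).isOpen
  obtain ⟨t, htU, hUt⟩ := hUc.elim_nhds_subcover B fun χ _ => hB_nhds χ
  rw [hUt.antisymm (iUnion₂_subset fun χ hχ => hF χ (htU χ hχ))]
  refine Subalgebra.biUnion_mem_indicatorSets t fun χ _ =>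
    Subalgebra.biInter_mem_indicatorSets _ fun m _ => ?_
  rw [setOf_apply_eq_eq_preimage_evalMonoidHom]
  exact Subalgebra.preimage_singleton_mem_indicatorSets
    (Algebra.subset_adjoin (mem_range_self m)) (finite_range_evalMonoidHom (hM m)) _

theorem span_range_evalMonoidHom_eq [DiscreteTopology M] (hM : IsMulTorsion M) :
    span ℂ (range (evalMonoidHom (M := M))) =
      span ℂ (compactOpenIndicators (PontryaginDual M) ℂ) := by
  apply le_antisymm
  · rw [span_le]
    rintro _ ⟨m, rfl⟩
    exact (evalMonoidHom m).mem_span_compactOpenIndicators_of_finite_range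
      (finite_range_evalMonoidHom (hM m))
  · rw [span_le, ← toSubmodule_adjoin_range_evalMonoidHom]
    rintro f ⟨U, hUc, hUo, hf⟩
    obtain ⟨g, hgS, hg⟩ := compactOpen_mem_indicatorSets_adjoin hM hUc hUo
    exact DFunLike.coe_injective (hg.trans hf.symm) ▸ hgS

end PontryaginDual

theorem isMulTorsion_multiplicative_of_addEquiv_finsupp {A A₀ Γ : Type*} [AddCommGroup A]
    [AddCommGroup A₀] [Finite A₀] (e : A ≃+ (Γ →₀ A₀)) : IsMulTorsion (Multiplicative A) := by
  intro g
  refine isOfFinOrder_iff_pow_eq_one.2 ⟨Nat.card A₀, Nat.card_pos, ?_⟩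
  show Multiplicative.ofAdd (Nat.card A₀ • g.toAdd) = Multiplicative.ofAdd 0
  congr 1
  exact e.injective (by ext γ; simp [card_nsmul_eq_zero'])

theorem span_characters_eq_span_indicators_compact_open_general
    (A₀ : Type) [AddCommGroup A₀] [Fintype A₀]
    (Γ : Type)
    (A : Type) [AddCommGroup A] [TopologicalSpace A] [DiscreteTopology A]
    (e : A ≃+ (Γ →₀ A₀)) :
    Submodule.span ℂ
      {f : C(PontryaginDual (Multiplicative A), ℂ) |
        ∃ a : A, ∀ χ : PontryaginDual (Multiplicative A),
          f χ = (χ (Multiplicative.ofAdd a) : ℂ)} =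
    Submodule.span ℂ
      {f : C(PontryaginDual (Multiplicative A), ℂ) |
        ∃ U : Set (PontryaginDual (Multiplicative A)), IsCompact U ∧ IsOpen U ∧
          ∀ χ, f χ = U.indicator (fun _ => (1 : ℂ)) χ} := by
  convert PontryaginDual.span_range_evalMonoidHom_eq
    (isMulTorsion_multiplicative_of_addEquiv_finsupp e) using 2
  · ext f
    simp [ContinuousMap.ext_iff, eq_comm, Multiplicative.exists]
  · ext f
    simp [compactOpenIndicators, funext_iff, Pi.one_def]

/-- Let `A₀` be a finite cyclic group, `Γ` a countable index set and
`A = ⊕_Γ A₀` (a discrete torsion abelian group), and let `Â` be the Pontryagin dual of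
`A`.  Inside `C(Â, ℂ)`, the `ℂ`-linear span of the evaluation functions `ev_a : χ ↦ χ(a)`
(`a ∈ A`) coincides with the `ℂ`-linear span of the indicator functions of compact open
subsets of `Â`. -/
theorem span_characters_eq_span_indicators_compact_open
    (A₀ : Type) [AddCommGroup A₀] [Fintype A₀] (hcyc : IsAddCyclic A₀)
    (Γ : Type) [Countable Γ]
    (A : Type) [AddCommGroup A] [TopologicalSpace A] [DiscreteTopology A]
    [IsTopologicalAddGroup A]
    (e : A ≃+ (Γ →₀ A₀)) :
    Submodule.span ℂ
      {f : C(PontryaginDual (Multiplicative A), ℂ) |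
        ∃ a : A, ∀ χ : PontryaginDual (Multiplicative A),
          f χ = (χ (Multiplicative.ofAdd a) : ℂ)} =
    Submodule.span ℂ
      {f : C(PontryaginDual (Multiplicative A), ℂ) |
        ∃ U : Set (PontryaginDual (Multiplicative A)), IsCompact U ∧ IsOpen U ∧
          ∀ χ, f χ = U.indicator (fun _ => (1 : ℂ)) χ} :=
  span_characters_eq_span_indicators_compact_open_general A₀ Γ A e
end

section
/- Let Γ be a countable group acting measurably and measure-preservingly on a standard probability space (X, μ), and let F : X × Γ → ℂ be a measurable function for which there exists C ∈ ℕ such that for μ-almost every x ∈ X the set {γ ∈ Γ : F(x, γ) ≠ 0} has at most C elements. Then for every ε > 0 there exist a Borel set Y ⊆ X with μ(Y) ≥ 1 − ε and D ∈ ℕ such that for every y ∈ X the set {γ ∈ Γ : γ·y ∈ Y and F(γ·y, γ) ≠ 0} has at most D elements. -/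
/-!
Since `Γ` is countable and `F x` has finite support for a.e. `x`, the sets
`Y_S = {x | support (F x) ⊆ S}`, `S` a finite subset of `Γ`, increase to a conull set, so by
continuity of the measure one of them has measure greater than `1 - ε`. Cutting down by `Y_S`
leaves only arrows `(γ • y, γ)` with `γ ∈ S`, so every source fiber has at most `#S` elements.
-/

open MeasureTheory Filter Topology

section SupportSubset

variable {X Γ M : Type*} [Zero M]

def setOfSupportSubset (F : X → Γ → M) (S : Finset Γ) : Set X :=
  {x | Function.support (F x) ⊆ S}

theorem setOfSupportSubset_mono (F : X → Γ → M) : Monotone (setOfSupportSubset F) :=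
  fun _ _ hST _ hx => hx.trans (Finset.coe_subset.2 hST)

theorem measurableSet_setOfSupportSubset [MeasurableSpace X] [Countable Γ] [MeasurableSpace M]
    [MeasurableSingletonClass M] {F : X → Γ → M} (hF : ∀ γ, Measurable fun x => F x γ)
    (S : Finset Γ) : MeasurableSet (setOfSupportSubset F S) := by
  simp only [setOfSupportSubset, Function.support_subset_iff', Set.ofPred_forall]
  exact .iInter fun γ => .iInter fun _ => hF γ (measurableSet_singleton 0)

theorem ae_mem_iUnion_setOfSupportSubset [MeasurableSpace X] {μ : Measure X} {F : X → Γ → M}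
    (hF : ∀ᵐ x ∂μ, (Function.support (F x)).Finite) :
    ∀ᵐ x ∂μ, x ∈ ⋃ S, setOfSupportSubset F S :=
  hF.mono fun _ hx => Set.mem_iUnion.2 ⟨hx.toFinset, hx.coe_toFinset.symm.subset⟩

theorem setOf_mem_setOfSupportSubset_and_ne_zero_subset (F : X → Γ → M) (S : Finset Γ)
    (a : Γ → X) : {γ | a γ ∈ setOfSupportSubset F S ∧ F (a γ) γ ≠ 0} ⊆ S :=
  fun _ ⟨hmem, hne⟩ => hmem hne

end SupportSubset

theorem exists_lt_measure_toReal_of_monotone_of_ae_mem_iUnion {α ι : Type*} [MeasurableSpace α]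
    {μ : Measure α} [IsProbabilityMeasure μ] [Preorder ι] [Nonempty ι] [IsDirected ι (· ≤ ·)]
    [IsCountablyGenerated (atTop : Filter ι)] {s : ι → Set α} (hs : Monotone s)
    (hcover : ∀ᵐ x ∂μ, x ∈ ⋃ i, s i) {r : ℝ} (hr : r < 1) : ∃ i, r < (μ (s i)).toReal := by
  have hunion : μ (⋃ i, s i) = 1 := by
    rw [measure_congr (eventuallyEq_univ.2 (show ⋃ i, s i ∈ ae μ from hcover)), measure_univ]
  have htendsto : Tendsto (fun i => (μ (s i)).toReal) atTop (𝓝 1) := by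
    have := tendsto_measure_iUnion_atTop (μ := μ) hs
    rw [hunion] at this
    exact (ENNReal.tendsto_toReal ENNReal.one_ne_top).comp this
  exact (htendsto.eventually (eventually_gt_nhds hr)).exists

theorem cutdown_of_target_bounded_is_source_bounded_general
    {X : Type} [MeasurableSpace X]
    (μ : Measure X) [IsProbabilityMeasure μ]
    (Γ : Type) [Group Γ] [Countable Γ] [MulAction Γ X]
    (F : X → Γ → ℂ)
    (hFmeas : ∀ γ : Γ, Measurable fun x : X => F x γ)
    (C : ℕ) (hC : ∀ᵐ x ∂μ, Set.encard {γ : Γ | F x γ ≠ 0} ≤ C)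
    (ε : ℝ) (hε : 0 < ε) :
    ∃ Y : Set X, MeasurableSet Y ∧ 1 - ε ≤ (μ Y).toReal ∧
      ∃ D : ℕ, ∀ y : X, Set.encard {γ : Γ | γ • y ∈ Y ∧ F (γ • y) γ ≠ 0} ≤ D := by
  have hfinite : ∀ᵐ x ∂μ, (Function.support (F x)).Finite :=
    hC.mono fun _ => Set.finite_of_encard_le_coe
  obtain ⟨S, hS⟩ := exists_lt_measure_toReal_of_monotone_of_ae_mem_iUnion
    (setOfSupportSubset_mono F) (ae_mem_iUnion_setOfSupportSubset hfinite) (sub_lt_self 1 hε)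
  refine ⟨_, measurableSet_setOfSupportSubset hFmeas S, hS.le, S.card, fun y => ?_⟩
  calc _ ≤ (S : Set Γ).encard :=
        Set.encard_mono (setOf_mem_setOfSupportSubset_and_ne_zero_subset F S (· • y))
    _ = S.card := Set.encard_coe_eq_coe_finsetCard S

/-- Let a countable group `Γ` act measurably and measure-preservingly on a
standard probability space `(X, μ)`, and let `F : X × Γ → ℂ` (written here as
`F : X → Γ → ℂ`) have uniformly a.e. bounded "target fibers": for some `C ∈ ℕ`, for a.e.
`x` the set `{γ | F x γ ≠ 0}` has at most `C` elements.  Then for every `ε > 0` there are a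
Borel set `Y ⊆ X` with `μ Y ≥ 1 - ε` and `D ∈ ℕ` such that for every `y ∈ X` the "source
fiber" `{γ | γ • y ∈ Y ∧ F (γ • y) γ ≠ 0}` has at most `D` elements. -/
theorem cutdown_of_target_bounded_is_source_bounded
    {X : Type} [MeasurableSpace X] [StandardBorelSpace X]
    (μ : Measure X) [IsProbabilityMeasure μ]
    (Γ : Type) [Group Γ] [Countable Γ] [MulAction Γ X]
    (hact_meas : ∀ γ : Γ, Measurable fun x : X => γ • x)
    (hact_mp : ∀ γ : Γ, MeasurePreserving (fun x : X => γ • x) μ μ)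
    (F : X → Γ → ℂ)
    (hFmeas : ∀ γ : Γ, Measurable fun x : X => F x γ)
    (C : ℕ) (hC : ∀ᵐ x ∂μ, Set.encard {γ : Γ | F x γ ≠ 0} ≤ C)
    (ε : ℝ) (hε : 0 < ε) :
    ∃ Y : Set X, MeasurableSet Y ∧ 1 - ε ≤ (μ Y).toReal ∧
      ∃ D : ℕ, ∀ y : X, Set.encard {γ : Γ | γ • y ∈ Y ∧ F (γ • y) γ ≠ 0} ≤ D :=
  cutdown_of_target_bounded_is_source_bounded_general μ Γ F hFmeas C hC ε hε
end
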